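/- arXiv:2507.16387 — 2 statements merged into one kernel-verified Lean document; each statement's English description precedes it below -/
import Mathlib

section
/- For p ≥ 2, n ≥ 0 and k ≥ 0, the number of induced subgraphs of Γ^{(p)}_n isomorphic to Q_k equals sum over a from k to floor((n+1)(p-1)/p) of [n-a+1 choose a]_{p-1} · C(a,k). -/
/-- The `p`-nomial coefficient `[b choose a]_{p-1}`: the coefficient of `x^a`
in `(1 + x + x^2 + ⋯ + x^{p-1})^b`. -/
noncomputable def pnomial (p b a : ℕ) : ℕ :=
  ((∑ i ∈ Finset.range p, (Polynomial.X : Polynomial ℕ) ^ i) ^ b).coeff a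

/-- A vertex of the `p`-th order Fibonacci cube `Γ^{(p)}_n`: a binary string of length
`n` (as a function `Fin n → Bool`) with no `p` consecutive `1`s. -/
def gVert (p n : ℕ) (u : Fin n → Bool) : Prop :=
  ¬ (List.replicate p true) <:+: List.ofFn u

/-- The vertex set of the induced subcube of `Q_n` with bottom vertex `b` and support
`S` (the set of coordinates that vary): all strings agreeing with `b` outside `S`.
Together with the normalization `b i = false` for `i ∈ S`, such pairs `(b, S)` are in
bijection with the induced subgraphs of `Q_n` isomorphic to hypercubes. -/
def subcubeVerts {n : ℕ} (b : Fin n → Bool) (S : Finset (Fin n)) :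
    Set (Fin n → Bool) :=
  {u | ∀ i ∉ S, u i = b i}

open List

lemma rep_prefix_split (p : ℕ) (hp : 0 < p) (a b : List Bool) :
    replicate p true <+: a ++ false :: b ↔ replicate p true <+: a := by
  constructor
  · intro h
    rcases le_or_gt p a.length with hle | hlt
    · rw [prefix_iff_eq_take] at h ⊢
      rw [length_replicate] at h ⊢
      rwa [take_append_of_le_length hle] at h
    · exfalso
      have h1 : (replicate p true)[a.length]'(by simpa using hlt) =
          (a ++ false :: b)[a.length]'(by simp) := h.getElem _
      rw [List.getElem_append_right (le_refl _)] at h1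
      simp at h1
  · intro h
    exact h.trans (prefix_append _ _)

lemma rep_infix_split (p : ℕ) (hp : 0 < p) (a b : List Bool) :
    replicate p true <:+: a ++ false :: b ↔
      replicate p true <:+: a ∨ replicate p true <:+: b := by
  induction a with
  | nil =>
    simp only [nil_append, infix_cons_iff]
    constructor
    · rintro (h | h)
      · exfalso
        have h1 : (replicate p true)[0]'(by simpa using hp) =
            (false :: b)[0]'(by simp) := h.getElem _
        simp at h1
      · exact Or.inr h
    · rintro (h | h)
      · exact absurd (h.sublist.length_le) (by simp; omega)
      · exact Or.inr h
  | cons c a' ih =>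
    rw [cons_append, infix_cons_iff, infix_cons_iff]
    rw [show c :: (a' ++ false :: b) = (c :: a') ++ false :: b from rfl,
      rep_prefix_split p hp (c :: a') b]
    rw [ih]
    tauto

lemma rep_infix_replicate (p j : ℕ) :
    replicate p true <:+: replicate j (true : Bool) ↔ p ≤ j := by
  constructor
  · intro h
    simpa using h.sublist.length_le
  · intro h
    exact (List.prefix_iff_eq_take.mpr (by simp [List.take_replicate, Nat.min_eq_left h])).isInfix

lemma rep_infix_iff (p : ℕ) (l : List Bool) :
    replicate p true <:+: l ↔
      ∃ i, i + p ≤ l.length ∧ ∀ j < p, l[i + j]? = some true := by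
  constructor
  · rintro ⟨s, t, rfl⟩
    refine ⟨s.length, by simp, fun j hj => ?_⟩
    rw [List.append_assoc, List.getElem?_append_right (by omega), Nat.add_sub_cancel_left,
      List.getElem?_append_left (by simpa using hj)]
    simp [hj]
  · rintro ⟨i, hi, hall⟩
    have : (l.drop i).take p = replicate p true := by
      apply List.eq_replicate_iff.mpr
      constructor
      · simp; omega
      · intro b hb
        obtain ⟨j, hj, hget⟩ := List.mem_iff_getElem.mp hb
        have hjp : j < p := by simpa using (hj.trans_le (by simp))
        rw [List.getElem_take, List.getElem_drop] at hget
        have := hall j hjp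
        rw [List.getElem?_eq_getElem (by omega)] at this
        rw [← hget]
        exact Option.some.inj (by rw [← this])
    rw [← this]
    exact ((l.drop i).take_prefix p).isInfix.trans (l.drop_suffix i).isInfix

lemma rep_infix_mono {n p : ℕ} (u t : Fin n → Bool) (h : ∀ i, u i = true → t i = true)
    (hu : replicate p true <:+: List.ofFn u) : replicate p true <:+: List.ofFn t := by
  rw [rep_infix_iff] at hu ⊢
  obtain ⟨i, hi, hall⟩ := hu
  simp only [List.length_ofFn] at hi
  refine ⟨i, by simp [hi], fun j hj => ?_⟩
  have hlt : i + j < n := by omega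
  have := hall j hj
  rw [List.getElem?_ofFn] at this ⊢
  simp only [List.ofFnNthVal, hlt, dif_pos] at this ⊢
  exact congrArg some (h _ (Option.some.inj this))

def strs : ℕ → Finset (List Bool)
  | 0 => {[]}
  | n + 1 => ((strs n).image (List.cons true)) ∪ ((strs n).image (List.cons false))

lemma mem_strs : ∀ {n : ℕ} {l : List Bool}, l ∈ strs n ↔ l.length = n := by
  intro n
  induction n with
  | zero => intro l; simp [strs, List.length_eq_zero_iff]
  | succ m ih =>
    intro l
    simp only [strs, Finset.mem_union, Finset.mem_image]
    constructor
    · rintro (⟨l', hl', rfl⟩ | ⟨l', hl', rfl⟩) <;> simp [ih.mp hl']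
    · intro hl
      cases l with
      | nil => simp at hl
      | cons c l' =>
        simp only [List.length_cons, Nat.succ_inj] at hl
        cases c
        · exact Or.inr ⟨l', ih.mpr hl, rfl⟩
        · exact Or.inl ⟨l', ih.mpr hl, rfl⟩

noncomputable def M (p n a : ℕ) : ℕ :=
  ((strs n).filter (fun l => ¬ (replicate p true <:+: l) ∧ l.count true = a)).card

-- first-block length
def tw (l : List Bool) : ℕ := (l.takeWhile (· == true)).length

lemma takeWhile_eq_replicate (l : List Bool) :
    l.takeWhile (· == true) = replicate (tw l) true := by
  rw [List.eq_replicate_iff]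
  refine ⟨rfl, fun b hb => ?_⟩
  have := List.mem_takeWhile_imp hb
  simpa using this

lemma tw_le_count (l : List Bool) : tw l ≤ l.count true := by
  conv_rhs => rw [← List.takeWhile_append_dropWhile (p := (· == true)) (l := l)]
  rw [List.count_append, takeWhile_eq_replicate]
  simp

lemma decomp (l : List Bool) (h : tw l < l.length) :
    l = replicate (tw l) true ++ false :: l.drop (tw l + 1) := by
  have hsplit := List.takeWhile_append_dropWhile (p := (· == true)) (l := l)
  have hdw : l.dropWhile (· == true) = l.drop (tw l) := by
    calc l.dropWhile (· == true)
        = List.drop (l.takeWhile (· == true)).length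
            ((l.takeWhile (· == true)) ++ l.dropWhile (· == true)) :=
          List.drop_left.symm
      _ = l.drop (tw l) := by rw [hsplit]; rfl
  have hne : l.dropWhile (· == true) ≠ [] := by
    rw [hdw]
    simp only [ne_eq, List.drop_eq_nil_iff]
    omega
  have hhead : (l.dropWhile (· == true)).head hne = false := by
    have := List.head_dropWhile_not (· == true) hne
    simpa using this
  have hcons := (List.cons_head_tail hne).symm
  rw [hhead] at hcons
  have htail : (l.dropWhile (· == true)).tail = l.drop (tw l + 1) := by
    rw [hdw, List.tail_drop]
  conv_lhs => rw [← hsplit]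
  rw [takeWhile_eq_replicate, ← htail, ← hcons]

lemma tw_block (j : ℕ) (l' : List Bool) :
    tw (replicate j true ++ false :: l') = j := by
  induction j with
  | zero => simp [tw, List.takeWhile_cons]
  | succ m ih =>
    rw [List.replicate_succ, List.cons_append]
    simp only [tw, List.takeWhile_cons, beq_self_eq_true, if_true]
    simpa [tw] using ih

lemma pfree_block {p : ℕ} (hp : 0 < p) (j : ℕ) (l' : List Bool) :
    ¬ replicate p true <:+: (replicate j true ++ false :: l') ↔
      j < p ∧ ¬ replicate p true <:+: l' := by
  rw [rep_infix_split p hp, rep_infix_replicate]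
  simp only [not_or, Nat.not_le]

lemma M_rec (p n a : ℕ) (hp : 0 < p) (h : a < n) :
    M p n a = ∑ j ∈ Finset.range p, if j ≤ a then M p (n - j - 1) (a - j) else 0 := by
  rw [M, Finset.card_eq_sum_card_fiberwise (f := tw) (t := Finset.range p)
    (fun l hl => by
      rw [Finset.mem_coe, Finset.mem_filter] at hl
      rw [Finset.mem_coe, Finset.mem_range]
      by_contra hge
      push_neg at hge
      apply hl.2.1
      have h1 : replicate p true <+: replicate (tw l) true := by
        rw [prefix_iff_eq_take, take_replicate, length_replicate, Nat.min_eq_left hge]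
      have h2 := (h1.trans (takeWhile_eq_replicate l ▸ l.takeWhile_prefix (· == true)))
      exact h2.isInfix)]
  apply Finset.sum_congr rfl
  intro j hj
  rw [Finset.mem_range] at hj
  by_cases hja : j ≤ a
  · rw [if_pos hja, M]
    apply Finset.card_nbij' (fun l => l.drop (j + 1))
      (fun l' => replicate j true ++ false :: l')
    · intro l hl
      simp only [Finset.mem_coe, Finset.mem_filter, mem_strs] at hl ⊢
      obtain ⟨⟨hlen, hpf, hcnt⟩, htw⟩ := hl
      have hd := decomp l (by rw [htw, hlen]; omega)
      rw [htw] at hd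
      rw [hd] at hpf hcnt
      rw [pfree_block hp] at hpf
      simp [List.count_append, List.count_cons, List.count_replicate] at hcnt
      refine ⟨by rw [List.length_drop, hlen]; omega, hpf.2, by omega⟩
    · intro l' hl'
      simp only [Finset.mem_coe, Finset.mem_filter, mem_strs] at hl' ⊢
      obtain ⟨hlen, hpf, hcnt⟩ := hl'
      refine ⟨⟨?_, ?_, ?_⟩, tw_block j l'⟩
      · simp [hlen]; omega
      · rw [pfree_block hp]; exact ⟨hj, hpf⟩
      · simp [List.count_replicate, hcnt]; omega
    · intro l hl
      simp only [Finset.mem_coe, Finset.mem_filter, mem_strs] at hl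
      obtain ⟨⟨hlen, hpf, hcnt⟩, htw⟩ := hl
      have hd := decomp l (by rw [htw, hlen]; omega)
      rw [htw] at hd
      exact hd.symm
    · intro l' hl'
      dsimp only
      rw [show replicate j true ++ false :: l' = (replicate j true ++ [false]) ++ l' by simp,
        List.drop_left' (by simp)]
  · rw [if_neg hja]
    rw [Finset.card_eq_zero]
    apply Finset.eq_empty_of_forall_notMem
    intro l hl
    simp only [Finset.mem_coe, Finset.mem_filter, mem_strs] at hl
    obtain ⟨⟨hlen, hpf, hcnt⟩, htw⟩ := hl
    have := tw_le_count l
    omega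

lemma coeff_q (p a : ℕ) :
    (∑ i ∈ Finset.range p, (Polynomial.X : Polynomial ℕ) ^ i).coeff a
      = if a < p then 1 else 0 := by
  rw [Polynomial.finset_sum_coeff]
  simp only [Polynomial.coeff_X_pow]
  simp only [eq_comm (a := a)]
  rw [Finset.sum_ite_eq' (Finset.range p) a (fun _ => 1)]
  simp [Finset.mem_range]

lemma pnomial_zero (p a : ℕ) : pnomial p 0 a = if a = 0 then 1 else 0 := by
  simp [pnomial, Polynomial.coeff_one, eq_comm]

lemma pnomial_one (p a : ℕ) : pnomial p 1 a = if a < p then 1 else 0 := by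
  rw [pnomial, pow_one, coeff_q]

lemma pnomial_succ (p b a : ℕ) :
    pnomial p (b + 1) a = ∑ j ∈ Finset.range p,
      if j ≤ a then pnomial p b (a - j) else 0 := by
  rw [pnomial, pow_succ', Polynomial.coeff_mul,
    Finset.Nat.sum_antidiagonal_eq_sum_range_succ_mk]
  simp only [coeff_q]
  have h1 : ∀ x ∈ Finset.range (a + 1),
      (if x < p then (1:ℕ) else 0) * ((∑ i ∈ Finset.range p, (Polynomial.X : Polynomial ℕ) ^ i) ^ b).coeff (a - x)
        = if x < p then pnomial p b (a - x) else 0 := by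
    intro x _
    by_cases h : x < p <;> simp [h, pnomial]
  rw [Finset.sum_congr rfl h1]
  rw [← Finset.sum_filter, ← Finset.sum_filter]
  apply Finset.sum_congr _ (fun _ _ => rfl)
  ext x
  simp only [Finset.mem_filter, Finset.mem_range]
  omega

lemma pnomial_eq_zero {p b a : ℕ} (h : b * (p - 1) < a) : pnomial p b a = 0 := by
  apply Polynomial.coeff_eq_zero_of_natDegree_lt
  calc ((∑ i ∈ Finset.range p, (Polynomial.X : Polynomial ℕ) ^ i) ^ b).natDegree
      ≤ b * (∑ i ∈ Finset.range p, (Polynomial.X : Polynomial ℕ) ^ i).natDegree :=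
        Polynomial.natDegree_pow_le
    _ ≤ b * (p - 1) := by
        apply Nat.mul_le_mul_left
        apply Polynomial.natDegree_sum_le_of_forall_le
        intro i hi
        rw [Polynomial.natDegree_X_pow]
        exact Nat.le_sub_one_of_lt (Finset.mem_range.mp hi)
    _ < a := h

lemma M_diag (p n : ℕ) (hp : 0 < p) : M p n n = if n < p then 1 else 0 := by
  have hset : (strs n).filter (fun l => ¬(replicate p true <:+: l) ∧ l.count true = n)
      = if n < p then {replicate n true} else ∅ := by
    split_ifs with hnp
    · ext l
      simp only [Finset.mem_filter, mem_strs, Finset.mem_singleton]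
      constructor
      · rintro ⟨hlen, _, hcnt⟩
        have : ∀ b ∈ l, true = b := List.count_eq_length.mp (by rw [hcnt, hlen])
        rw [List.eq_replicate_iff]
        exact ⟨hlen, fun b hb => (this b hb).symm⟩
      · rintro rfl
        refine ⟨by simp, ?_, by simp⟩
        rw [rep_infix_replicate]
        omega
    · apply Finset.eq_empty_of_forall_notMem
      intro l hl
      simp only [Finset.mem_coe, Finset.mem_filter, mem_strs] at hl
      obtain ⟨hlen, hpf, hcnt⟩ := hl
      have : ∀ b ∈ l, true = b := List.count_eq_length.mp (by rw [hcnt, hlen])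
      have hrep : l = replicate n true := by
        rw [List.eq_replicate_iff]
        exact ⟨hlen, fun b hb => (this b hb).symm⟩
      apply hpf
      rw [hrep, rep_infix_replicate]
      omega
  rw [M, hset]
  split_ifs <;> simp

lemma M_eq_pnomial (p : ℕ) (hp : 0 < p) :
    ∀ n, ∀ a ≤ n, M p n a = pnomial p (n - a + 1) a := by
  intro n
  induction n using Nat.strong_induction_on with
  | _ n ih =>
    intro a ha
    rcases eq_or_lt_of_le ha with rfl | hlt
    · rw [M_diag p a hp]
      have h1 : a - a + 1 = 1 := by omega
      rw [h1, pnomial_one]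
    · rw [M_rec p n a hp hlt]
      have hb : n - a + 1 = (n - a) + 1 := rfl
      rw [hb, pnomial_succ]
      apply Finset.sum_congr rfl
      intro j hj
      rw [Finset.mem_range] at hj
      by_cases hja : j ≤ a
      · rw [if_pos hja, if_pos hja,
          ih (n - j - 1) (by omega) (a - j) (by omega)]
        congr 1
        omega
      · rw [if_neg hja, if_neg hja]

lemma count_true_ofFn : ∀ {n : ℕ} (t : Fin n → Bool),
    (List.ofFn t).count true = ∑ i, (if t i = true then 1 else 0) := by
  intro n
  induction n with
  | zero => intro t; simp
  | succ m ih =>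
    intro t
    rw [List.ofFn_succ, List.count_cons, ih, Fin.sum_univ_succ]
    cases h : t 0 <;> simp [h, Nat.add_comm]

def topv {n : ℕ} (b : Fin n → Bool) (S : Finset (Fin n)) : Fin n → Bool :=
  fun i => if i ∈ S then true else b i

def ones {n : ℕ} (t : Fin n → Bool) : Finset (Fin n) :=
  Finset.univ.filter (fun i => t i = true)

noncomputable def wt {n : ℕ} (t : Fin n → Bool) : ℕ := (ones t).card

instance (p n : ℕ) (u : Fin n → Bool) : Decidable (gVert p n u) :=
  inferInstanceAs (Decidable ¬ _)

lemma subcube_iff {p n : ℕ} (b : Fin n → Bool) (S : Finset (Fin n))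
    (hb : ∀ i ∈ S, b i = false) :
    (∀ u ∈ subcubeVerts b S, gVert p n u) ↔ gVert p n (topv b S) := by
  constructor
  · intro h
    exact h _ (fun i hi => by simp [topv, hi])
  · intro h u hu
    intro hinf
    exact h (rep_infix_mono u (topv b S)
      (fun i hi => by
        by_cases hiS : i ∈ S
        · simp [topv, hiS]
        · simp [topv, hiS, ← hu i hiS, hi]) hinf)

noncomputable def NN (p n a : ℕ) : ℕ :=
  (Finset.univ.filter (fun t : Fin n → Bool => gVert p n t ∧ wt t = a)).card

lemma partA (p n k : ℕ) :
    {bS : (Fin n → Bool) × Finset (Fin n) |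
        bS.2.card = k ∧ (∀ i ∈ bS.2, bS.1 i = false) ∧
        (∀ u ∈ subcubeVerts bS.1 bS.2, gVert p n u)}.ncard
      = ∑ a ∈ Finset.range (n + 1), NN p n a * a.choose k := by
  classical
  have hset : {bS : (Fin n → Bool) × Finset (Fin n) |
        bS.2.card = k ∧ (∀ i ∈ bS.2, bS.1 i = false) ∧
        (∀ u ∈ subcubeVerts bS.1 bS.2, gVert p n u)}
      = ↑(Finset.univ.filter (fun bS : (Fin n → Bool) × Finset (Fin n) =>
          bS.2.card = k ∧ (∀ i ∈ bS.2, bS.1 i = false) ∧ gVert p n (topv bS.1 bS.2))) := by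
    ext ⟨b, S⟩
    simp only [Set.mem_setOf_eq, Finset.coe_filter, Finset.mem_univ, true_and]
    constructor
    · rintro ⟨h1, h2, h3⟩
      exact ⟨h1, h2, (subcube_iff b S h2).mp h3⟩
    · rintro ⟨h1, h2, h3⟩
      exact ⟨h1, h2, (subcube_iff b S h2).mpr h3⟩
  rw [hset, Set.ncard_coe_finset]
  -- bijection to (t, S) pairs
  have hbij : (Finset.univ.filter (fun bS : (Fin n → Bool) × Finset (Fin n) =>
          bS.2.card = k ∧ (∀ i ∈ bS.2, bS.1 i = false) ∧ gVert p n (topv bS.1 bS.2))).card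
      = (Finset.univ.filter (fun tS : (Fin n → Bool) × Finset (Fin n) =>
          tS.2.card = k ∧ tS.2 ⊆ ones tS.1 ∧ gVert p n tS.1)).card := by
    have h1 : ∀ bS : (Fin n → Bool) × Finset (Fin n),
        bS ∈ Finset.univ.filter (fun bS : (Fin n → Bool) × Finset (Fin n) =>
          bS.2.card = k ∧ (∀ i ∈ bS.2, bS.1 i = false) ∧ gVert p n (topv bS.1 bS.2)) →
        (topv bS.1 bS.2, bS.2) ∈ Finset.univ.filter
          (fun tS : (Fin n → Bool) × Finset (Fin n) =>
          tS.2.card = k ∧ tS.2 ⊆ ones tS.1 ∧ gVert p n tS.1) := by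
      rintro ⟨b, S⟩ h
      simp only [Finset.mem_filter, Finset.mem_univ, true_and] at h ⊢
      exact ⟨h.1, fun i hi => by simp [ones, topv, hi], h.2.2⟩
    have h2 : ∀ tS : (Fin n → Bool) × Finset (Fin n),
        tS ∈ Finset.univ.filter (fun tS : (Fin n → Bool) × Finset (Fin n) =>
          tS.2.card = k ∧ tS.2 ⊆ ones tS.1 ∧ gVert p n tS.1) →
        ((fun i => if i ∈ tS.2 then false else tS.1 i, tS.2) :
            (Fin n → Bool) × Finset (Fin n)) ∈
          Finset.univ.filter (fun bS : (Fin n → Bool) × Finset (Fin n) =>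
          bS.2.card = k ∧ (∀ i ∈ bS.2, bS.1 i = false) ∧ gVert p n (topv bS.1 bS.2)) := by
      rintro ⟨t, S⟩ h
      simp only [Finset.mem_filter, Finset.mem_univ, true_and] at h ⊢
      have htop : (topv (fun i => if i ∈ S then false else t i) S) = t := by
        funext i
        by_cases hi : i ∈ S
        · have := h.2.1 hi
          simp only [ones, Finset.mem_filter] at this
          simp [topv, hi, this.2]
        · simp [topv, hi]
      refine ⟨h.1, fun i hi => by simp [hi], ?_⟩
      rw [htop]; exact h.2.2
    apply Finset.card_nbij'
      (fun bS => (topv bS.1 bS.2, bS.2))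
      (fun tS => (fun i => if i ∈ tS.2 then false else tS.1 i, tS.2)) (by exact h1) (by exact h2)
    · rintro ⟨b, S⟩ h
      simp only [Finset.mem_coe, Finset.mem_filter, Finset.mem_univ, true_and] at h
      simp only [Prod.mk.injEq]
      refine ⟨funext fun i => ?_, trivial⟩
      by_cases hi : i ∈ S
      · simp [hi, h.2.1 i hi]
      · simp [topv, hi]
    · rintro ⟨t, S⟩ h
      simp only [Finset.mem_coe, Finset.mem_filter, Finset.mem_univ, true_and] at h
      simp only [Prod.mk.injEq]
      refine ⟨funext fun i => ?_, trivial⟩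
      by_cases hi : i ∈ S
      · have := h.2.1 hi
        simp only [ones, Finset.mem_filter] at this
        simp [topv, hi, this.2]
      · simp [topv, hi]
  rw [hbij]
  -- fiberwise over t
  rw [Finset.card_eq_sum_card_fiberwise
    (f := fun tS : (Fin n → Bool) × Finset (Fin n) => tS.1)
    (t := Finset.univ.filter (fun t => gVert p n t))
    (fun x hx => by
      simp only [Finset.mem_coe, Finset.mem_filter, Finset.mem_univ, true_and] at hx ⊢
      exact hx.2.2)]
  -- each fiber has card (wt t).choose k
  have hfib : ∀ t ∈ Finset.univ.filter (fun t => gVert p n t),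
      ((Finset.univ.filter (fun tS : (Fin n → Bool) × Finset (Fin n) =>
          tS.2.card = k ∧ tS.2 ⊆ ones tS.1 ∧ gVert p n tS.1)).filter
         (fun tS => tS.1 = t)).card = (wt t).choose k := by
    intro t ht
    simp only [Finset.mem_filter, Finset.mem_univ, true_and] at ht
    rw [wt, ← Finset.card_powersetCard k (ones t)]
    apply Finset.card_nbij' (fun tS => tS.2) (fun S => (t, S))
    · rintro ⟨t', S⟩ h
      simp only [Finset.mem_coe, Finset.mem_filter, Finset.mem_univ, true_and] at h
      obtain ⟨⟨h1, h2, _⟩, rfl⟩ := h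
      exact Finset.mem_powersetCard.mpr ⟨h2, h1⟩
    · intro S hS
      rw [Finset.mem_coe, Finset.mem_powersetCard] at hS
      simp only [Finset.mem_coe, Finset.mem_filter, Finset.mem_univ, true_and]
      exact ⟨⟨hS.2, hS.1, ht⟩, trivial⟩
    · rintro ⟨t', S⟩ h
      simp only [Finset.mem_coe, Finset.mem_filter, Finset.mem_univ, true_and] at h
      rw [h.2]
    · intro S hS
      rfl
  rw [Finset.sum_congr rfl hfib]
  -- fiberwise over weight
  rw [← Finset.sum_fiberwise_of_maps_to (g := wt) (t := Finset.range (n+1))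
    (fun t ht => by
      simp only [Finset.mem_coe, Finset.mem_range]
      exact Nat.lt_succ_of_le ((Finset.card_filter_le _ _).trans (by simp)))]
  apply Finset.sum_congr rfl
  intro a _
  rw [Finset.filter_filter]
  unfold NN
  have hconst : ∀ t ∈ Finset.univ.filter (fun t => gVert p n t ∧ wt t = a),
      (wt t).choose k = a.choose k := by
    intro t ht
    rw [Finset.mem_filter] at ht
    rw [ht.2.2]
  rw [Finset.sum_congr rfl hconst, Finset.sum_const, smul_eq_mul]

lemma getD_lt {α : Type*} (l : List α) (i : ℕ) (h : i < l.length) (d : α) :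
    l.getD i d = l[i] := by
  rw [List.getD_eq_getElem?_getD, List.getElem?_eq_getElem h]
  rfl

lemma wt_eq_sum {n : ℕ} (t : Fin n → Bool) :
    wt t = ∑ i, (if t i = true then 1 else 0) := by
  rw [wt, ones, Finset.card_filter]

lemma NN_eq_M (p n a : ℕ) : NN p n a = M p n a := by
  rw [NN, M]
  apply Finset.card_nbij' (fun t => List.ofFn t) (fun l => fun i : Fin n => l.getD i false)
  · intro t ht
    simp only [Finset.mem_coe, Finset.mem_filter, Finset.mem_univ, true_and] at ht
    simp only [Finset.mem_coe, Finset.mem_filter, mem_strs]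
    refine ⟨by simp, ht.1, ?_⟩
    rw [count_true_ofFn, ← wt_eq_sum, ht.2]
  · intro l hl
    simp only [Finset.mem_coe, Finset.mem_filter, mem_strs] at hl
    obtain ⟨hlen, hpf, hcnt⟩ := hl
    have hofn : List.ofFn (fun i : Fin n => l.getD i false) = l := by
      apply List.ext_getElem (by simp [hlen])
      intro i h1 h2
      simp only [List.getElem_ofFn]
      exact getD_lt l i h2 false
    simp only [Finset.mem_coe, Finset.mem_filter, Finset.mem_univ, true_and]
    constructor
    · show ¬ _ <:+: _
      rw [hofn]
      exact hpf
    · rw [wt_eq_sum, ← count_true_ofFn, hofn, hcnt]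
  · intro t ht
    funext i
    dsimp only
    rw [getD_lt _ _ (by simp [i.isLt]) _]
    simp
  · intro l hl
    simp only [Finset.mem_coe, Finset.mem_filter, mem_strs] at hl
    apply List.ext_getElem (by simp [hl.1])
    intro i h1 h2
    simp only [List.getElem_ofFn]
    exact getD_lt l i h2 false

/-- For `p ≥ 2`, `n ≥ 0` and `k ≥ 0`, the number of induced subgraphs of `Γ^{(p)}_n`
isomorphic to `Q_k` equals
`∑_{a=k}^{⌊(n+1)(p-1)/p⌋} [n-a+1 choose a]_{p-1} ⬝ C(a, k)`. -/
theorem stmt15 (p n k : ℕ) (hp : 2 ≤ p) :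
    {bS : (Fin n → Bool) × Finset (Fin n) |
        bS.2.card = k ∧ (∀ i ∈ bS.2, bS.1 i = false) ∧
        (∀ u ∈ subcubeVerts bS.1 bS.2, gVert p n u)}.ncard
      = ∑ a ∈ Finset.Icc k ((n + 1) * (p - 1) / p),
          pnomial p (n - a + 1) a * a.choose k := by
  have hp0 : 0 < p := by omega
  rw [partA p n k]
  have h1 : ∀ a ∈ Finset.range (n + 1),
      NN p n a * a.choose k = pnomial p (n - a + 1) a * a.choose k := by
    intro a ha
    rw [Finset.mem_range] at ha
    rw [NN_eq_M, M_eq_pnomial p hp0 n a (by omega)]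
  rw [Finset.sum_congr rfl h1]
  have hM0n : (n + 1) * (p - 1) / p ≤ n := by
    have h2 : (n + 1) * (p - 1) / p < n + 1 := by
      rw [Nat.div_lt_iff_lt_mul hp0]
      have h3 : p - 1 < p := by omega
      exact (Nat.mul_lt_mul_left (show 0 < n + 1 by omega)).mpr h3
    omega
  symm
  apply Finset.sum_subset
  · intro x hx
    rw [Finset.mem_Icc] at hx
    rw [Finset.mem_range]
    omega
  · intro x hx hnx
    rw [Finset.mem_range] at hx
    rw [Finset.mem_Icc] at hnx
    push_neg at hnx
    by_cases hxk : x < k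
    · rw [Nat.choose_eq_zero_of_lt hxk, Nat.mul_zero]
    · have hxM : (n + 1) * (p - 1) / p < x := hnx (by omega)
      have hpz : pnomial p (n - x + 1) x = 0 := by
        apply pnomial_eq_zero
        have hd := Nat.div_add_mod ((n + 1) * (p - 1)) p
        have hm : (n + 1) * (p - 1) % p < p := Nat.mod_lt _ hp0
        have key : (n + 1) * (p - 1) < p * x := by
          have h2 : (n + 1) * (p - 1) < p * ((n + 1) * (p - 1) / p + 1) := by
            rw [Nat.mul_add, Nat.mul_one]
            exact lt_of_eq_of_lt hd.symm (Nat.add_lt_add_left hm _)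
          exact h2.trans_le (Nat.mul_le_mul_left p (by omega))
        have hsplit : (n + 1) * (p - 1) = (n - x + 1) * (p - 1) + x * (p - 1) := by
          rw [← Nat.add_mul]
          congr 1
          omega
        have hxp : p * x = x * (p - 1) + x := by
          obtain ⟨q, rfl⟩ : ∃ q, p = q + 1 := ⟨p - 1, by omega⟩
          simp [Nat.add_sub_cancel]
          ring
        rw [hsplit, hxp, Nat.add_comm (x * (p - 1)) x] at key
        exact Nat.lt_of_add_lt_add_right key
      rw [hpz, Nat.zero_mul]
end

section
/- For p ≥ 1, the numbers h_k(n) of maximal induced hypercubes of dimension k in the Fibonacci p-cube Γ^p_n satisfy, for all n ≥ 2p+1 and k ≥ 1: h_k(n) = sum over i from 1 to p+1 of h_{k-1}(n-p-i). -/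
/-- The `p`-nomial coefficient with integer indices, `0` outside the valid range. -/
noncomputable def pnomZ (p : ℕ) (b a : ℤ) : ℕ :=
  if 0 ≤ b then (if 0 ≤ a then pnomial p b.toNat a.toNat else 0) else 0

/-- A vertex of the Fibonacci `p`-cube `Γ^p_n`: a binary string of length `n` in which
any two `1`s are separated by at least `p` `0`s. -/
def sepVert (p n : ℕ) (u : Fin n → Bool) : Prop :=
  ∀ i j : Fin n, i < j → u i = true → u j = true → (i : ℕ) + p + 1 ≤ (j : ℕ)

/-- `(b, S)` represents a maximal induced hypercube of `Γ^p_n`. -/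
def IsMaxCube (p n : ℕ) (b : Fin n → Bool) (S : Finset (Fin n)) : Prop :=
  (∀ i ∈ S, b i = false) ∧
  (∀ u ∈ subcubeVerts b S, sepVert p n u) ∧
  ∀ (b' : Fin n → Bool) (S' : Finset (Fin n)), (∀ i ∈ S', b' i = false) →
    (∀ u ∈ subcubeVerts b' S', sepVert p n u) →
    subcubeVerts b S ⊆ subcubeVerts b' S' → subcubeVerts b' S' = subcubeVerts b S

/-- The number of maximal induced hypercubes of dimension `k` in `Γ^p_n`. -/
noncomputable def hCount (p n k : ℕ) : ℕ :=
  {bS : (Fin n → Bool) × Finset (Fin n) |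
    bS.2.card = k ∧ IsMaxCube p n bS.1 bS.2}.ncard

attribute [local instance] Classical.propDecidable

/-- A `p`-separated finite set of naturals. -/
def SepN (p : ℕ) (T : Finset ℕ) : Prop :=
  ∀ a ∈ T, ∀ b ∈ T, a < b → a + p + 1 ≤ b

/-- A maximal `p`-separated subset of `{0, …, n-1}`. -/
def MaxSepN (p n : ℕ) (T : Finset ℕ) : Prop :=
  T ⊆ Finset.range n ∧ SepN p T ∧ ∀ j < n, j ∉ T → ¬ SepN p (insert j T)

lemma sepN_mono {p : ℕ} {S T : Finset ℕ} (hST : S ⊆ T) (hT : SepN p T) : SepN p S :=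
  fun a ha b hb hab => hT a (hST ha) b (hST hb) hab

lemma sepVert_of_subset {p n : ℕ} {u : Fin n → Bool} {T : Finset ℕ}
    (hT : SepN p T) (h : ∀ i : Fin n, u i = true → (i : ℕ) ∈ T) : sepVert p n u :=
  fun i j hij hui huj => hT i (h i hui) j (h j huj) hij

lemma sepVert_mono {p n : ℕ} {u v : Fin n → Bool}
    (hv : sepVert p n v) (h : ∀ i, u i = true → v i = true) : sepVert p n u :=
  fun i j hij hui huj => hv i j hij (h i hui) (h j huj)

lemma isMaxCube_iff (p n : ℕ) (b : Fin n → Bool) (S : Finset (Fin n)) :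
    IsMaxCube p n b S ↔ b = (fun _ => false) ∧ MaxSepN p n (S.image Fin.val) := by
  constructor
  · rintro ⟨h1, h2, h3⟩
    -- first: the bottom vertex is the all-false string
    have hbf : ∀ j, b j = false := by
      intro j
      by_contra hbj'
      have hbj : b j = true := by
        cases hb : b j
        · exact absurd hb hbj'
        · rfl
      have hjS : j ∉ S := fun h => by simp [h1 j h] at hbj
      set b' : Fin n → Bool := Function.update b j false with hb'def
      have hprem1 : ∀ i ∈ insert j S, b' i = false := by
        intro i hi
        rcases Finset.mem_insert.mp hi with rfl | hiS
        · simp [hb'def]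
        · have hij : i ≠ j := by rintro rfl; exact hjS hiS
          rw [hb'def, Function.update_of_ne hij]
          exact h1 i hiS
      have hprem2 : ∀ u ∈ subcubeVerts b' (insert j S), sepVert p n u := by
        intro u hu
        have hu' : Function.update u j true ∈ subcubeVerts b S := by
          intro i hiS
          by_cases hij : i = j
          · subst hij; simp [Function.update_self, hbj]
          · rw [Function.update_of_ne hij]
            have h0 : i ∉ insert j S := by
              simp [Finset.mem_insert, hij, hiS]
            have := hu i h0
            rwa [hb'def, Function.update_of_ne hij] at this
        refine sepVert_mono (h2 _ hu') ?_
        intro i hi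
        by_cases hij : i = j
        · subst hij; simp [Function.update_self]
        · rwa [Function.update_of_ne hij]
      have hsub : subcubeVerts b S ⊆ subcubeVerts b' (insert j S) := by
        intro u hu i hi
        have hiS : i ∉ S := fun h => hi (Finset.mem_insert_of_mem h)
        have hij : i ≠ j := by rintro rfl; exact hi (Finset.mem_insert_self _ _)
        rw [hu i hiS, hb'def, Function.update_of_ne hij]
      have heq := h3 b' (insert j S) hprem1 hprem2 hsub
      have hb'mem : b' ∈ subcubeVerts b' (insert j S) := fun i _ => rfl
      rw [heq] at hb'mem
      have := hb'mem j hjS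
      rw [hb'def, Function.update_self, hbj] at this
      exact Bool.false_ne_true this
    have hbeq : b = (fun _ => false) := funext hbf
    refine ⟨hbeq, ?_, ?_, ?_⟩
    · intro t ht
      obtain ⟨i, hi, rfl⟩ := Finset.mem_image.mp ht
      exact Finset.mem_range.mpr i.isLt
    · -- S itself is separated
      intro a ha c hc hac
      obtain ⟨i, hi, rfl⟩ := Finset.mem_image.mp ha
      obtain ⟨j, hj, rfl⟩ := Finset.mem_image.mp hc
      have hu : (fun i : Fin n => decide (i ∈ S)) ∈ subcubeVerts b S := by
        intro i hiS
        simp [hiS, hbf i]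
      exact h2 _ hu i j hac (by simp [hi]) (by simp [hj])
    · -- maximality
      intro j hj hjT hsep
      set jf : Fin n := ⟨j, hj⟩ with hjf
      have hjfS : jf ∉ S := fun h => hjT (Finset.mem_image.mpr ⟨jf, h, rfl⟩)
      have hprem1 : ∀ i ∈ insert jf S, b i = false := fun i _ => hbf i
      have hprem2 : ∀ u ∈ subcubeVerts b (insert jf S), sepVert p n u := by
        intro u hu
        refine sepVert_of_subset hsep ?_
        intro i hi
        have hiS : i ∈ insert jf S := by
          by_contra h
          have := hu i h
          rw [hbf i] at this
          rw [this] at hi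
          exact Bool.false_ne_true hi
        rcases Finset.mem_insert.mp hiS with rfl | hiS
        · exact Finset.mem_insert_self _ _
        · exact Finset.mem_insert_of_mem (Finset.mem_image.mpr ⟨i, hiS, rfl⟩)
      have hsub : subcubeVerts b S ⊆ subcubeVerts b (insert jf S) := by
        intro u hu i hi
        exact hu i fun h => hi (Finset.mem_insert_of_mem h)
      have heq := h3 b (insert jf S) hprem1 hprem2 hsub
      have hmem : (fun i : Fin n => decide (i ∈ insert jf S)) ∈
          subcubeVerts b (insert jf S) := by
        intro i hi
        simp [hi, hbf i]
      rw [heq] at hmem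
      have := hmem jf hjfS
      rw [hbf jf] at this
      simp at this
  · rintro ⟨rfl, hTsub, hsep, hmax⟩
    refine ⟨fun i _ => rfl, ?_, ?_⟩
    · intro u hu
      refine sepVert_of_subset hsep ?_
      intro i hi
      have hiS : i ∈ S := by
        by_contra h
        have := hu i h
        rw [this] at hi
        exact Bool.false_ne_true hi
      exact Finset.mem_image.mpr ⟨i, hiS, rfl⟩
    · intro b' S' h1' h2' hsub
      have hb'f : ∀ i, b' i = false := by
        intro i
        by_cases hi : i ∈ S'
        · exact h1' i hi
        · have h0 : (fun _ : Fin n => false) ∈ subcubeVerts (fun _ => false) S :=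
            fun _ _ => rfl
          exact (hsub h0 i hi).symm
      have hSS' : S ⊆ S' := by
        intro s hs
        by_contra hsS'
        have h0 : (fun i : Fin n => decide (i = s)) ∈
            subcubeVerts (fun _ => false) S := by
          intro i hi
          have : i ≠ s := by rintro rfl; exact hi hs
          simp [this]
        have := hsub h0 s hsS'
        rw [hb'f s] at this
        simp at this
      have hS'sep : SepN p (S'.image Fin.val) := by
        intro a ha c hc hac
        obtain ⟨i, hi, rfl⟩ := Finset.mem_image.mp ha
        obtain ⟨j, hj, rfl⟩ := Finset.mem_image.mp hc
        have hmem : (fun i : Fin n => decide (i ∈ S')) ∈ subcubeVerts b' S' := by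
          intro i hiS'
          simp [hiS', hb'f i]
        exact h2' _ hmem i j hac (by simp [hi]) (by simp [hj])
      have hS'S : S' ⊆ S := by
        intro j hj
        by_contra hjS
        have hjT : (j : ℕ) ∉ S.image Fin.val := by
          intro h
          obtain ⟨i, hi, hij⟩ := Finset.mem_image.mp h
          rw [Fin.val_injective hij] at hi
          exact hjS hi
        refine hmax (j : ℕ) j.isLt hjT ?_
        refine sepN_mono ?_ hS'sep
        intro t ht
        rcases Finset.mem_insert.mp ht with rfl | ht
        · exact Finset.mem_image.mpr ⟨j, hj, rfl⟩
        · obtain ⟨i, hi, rfl⟩ := Finset.mem_image.mp ht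
          exact Finset.mem_image.mpr ⟨i, hSS' hi, rfl⟩
      have hS : S' = S := Finset.Subset.antisymm hS'S hSS'
      have hb : b' = (fun _ => false) := funext hb'f
      rw [hS, hb]

lemma hCount_eq (p n k : ℕ) :
    hCount p n k = ((Finset.range n).powerset.filter
      (fun T => T.card = k ∧ MaxSepN p n T)).card := by
  have hA : {bS : (Fin n → Bool) × Finset (Fin n) |
      bS.2.card = k ∧ IsMaxCube p n bS.1 bS.2}
      = (fun S : Finset (Fin n) => ((fun _ => false), S)) ''
        {S : Finset (Fin n) | S.card = k ∧ MaxSepN p n (S.image Fin.val)} := by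
    ext ⟨b, S⟩
    simp only [Set.mem_setOf_eq, Set.mem_image, isMaxCube_iff, Prod.mk.injEq]
    constructor
    · rintro ⟨hc, rfl, hm⟩
      exact ⟨S, ⟨hc, hm⟩, rfl, rfl⟩
    · rintro ⟨S', ⟨hc, hm⟩, rfl, rfl⟩
      exact ⟨hc, rfl, hm⟩
  have hinj1 : Function.Injective
      (fun S : Finset (Fin n) => (((fun _ => false) : Fin n → Bool), S)) := by
    intro a b h
    exact congrArg Prod.snd h
  have hinj2 : Function.Injective (Finset.image (Fin.val : Fin n → ℕ)) :=
    Finset.image_injective Fin.val_injective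
  have hB : (Finset.image (Fin.val : Fin n → ℕ)) ''
      {S : Finset (Fin n) | S.card = k ∧ MaxSepN p n (S.image Fin.val)}
      = ↑(((Finset.range n).powerset.filter
          (fun T => T.card = k ∧ MaxSepN p n T))) := by
    ext T
    simp only [Set.mem_image, Set.mem_setOf_eq, Finset.coe_filter,
      Finset.mem_powerset]
    constructor
    · rintro ⟨S, ⟨hc, hm⟩, rfl⟩
      exact ⟨hm.1, by rwa [Finset.card_image_of_injective _ Fin.val_injective], hm⟩
    · rintro ⟨hT, hc, hm⟩
      refine ⟨Finset.univ.filter (fun i : Fin n => (i : ℕ) ∈ T), ?_⟩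
      have himg : (Finset.univ.filter (fun i : Fin n => (i : ℕ) ∈ T)).image Fin.val
          = T := by
        ext t
        simp only [Finset.mem_image, Finset.mem_filter, Finset.mem_univ, true_and]
        constructor
        · rintro ⟨i, hi, rfl⟩; exact hi
        · intro ht
          exact ⟨⟨t, Finset.mem_range.mp (hT ht)⟩, ht, rfl⟩
      rw [himg]
      exact ⟨⟨by rwa [← himg, Finset.card_image_of_injective _ Fin.val_injective]
        at hc, hm⟩, rfl⟩
  rw [hCount, hA, Set.ncard_image_of_injective _ hinj1,
    ← Set.ncard_image_of_injective _ hinj2, hB, Set.ncard_coe_finset]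

lemma max_unbot' {T : Finset ℕ} (hne : T.Nonempty) : WithBot.unbotD 0 T.max = T.max' hne := by
  rw [← Finset.coe_max' hne, WithBot.unbotD_coe]

/-- The maximum of a maximal separated set is in the last `p+1` positions. -/
lemma max_ge {p n : ℕ} {T : Finset ℕ} (hm : MaxSepN p n T) (hne : T.Nonempty) :
    n ≤ T.max' hne + p + 1 := by
  by_contra h
  push_neg at h
  set s := T.max' hne with hs
  have hsn : s < n := Finset.mem_range.mp (hm.1 (T.max'_mem hne))
  have hjT : n - 1 ∉ T := by
    intro hmem
    have := Finset.le_max' T _ hmem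
    omega
  refine hm.2.2 (n - 1) (by omega) hjT ?_
  intro a ha c hc hac
  rcases Finset.mem_insert.mp ha with rfl | ha
  · rcases Finset.mem_insert.mp hc with rfl | hc
    · omega
    · have := Finset.le_max' T _ hc
      omega
  · rcases Finset.mem_insert.mp hc with rfl | hc
    · have := Finset.le_max' T _ ha
      omega
    · exact hm.2.1 a ha c hc hac

lemma key (p n k : ℕ) (hp : 1 ≤ p) (hk : 1 ≤ k) (hn : 2 * p + 1 ≤ n) :
    ((Finset.range n).powerset.filter (fun T => T.card = k ∧ MaxSepN p n T)).card
      = ∑ i ∈ Finset.Icc 1 (p + 1),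
        ((Finset.range (n - p - i)).powerset.filter
          (fun T => T.card = k - 1 ∧ MaxSepN p (n - p - i) T)).card := by
  classical
  set A := (Finset.range n).powerset.filter (fun T => T.card = k ∧ MaxSepN p n T)
    with hA
  have hfib : ∀ T ∈ A, n - WithBot.unbotD 0 T.max ∈ Finset.Icc 1 (p + 1) := by
    intro T hT
    obtain ⟨hTpow, hTcard, hTmax⟩ := Finset.mem_filter.mp hT
    have hne : T.Nonempty := Finset.card_pos.mp (by omega)
    rw [max_unbot' hne]
    have h1 := max_ge hTmax hne
    have h2 : T.max' hne < n := Finset.mem_range.mp (hTmax.1 (T.max'_mem hne))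
    rw [Finset.mem_Icc]
    omega
  rw [Finset.card_eq_sum_card_fiberwise hfib]
  refine Finset.sum_congr rfl ?_
  intro d hd
  obtain ⟨hd1, hd2⟩ := Finset.mem_Icc.mp hd
  set m := n - p - d with hmdef
  have hmp : m + p = n - d := by omega
  have hTfacts : ∀ T ∈ A.filter (fun T => n - WithBot.unbotD 0 T.max = d),
      T.card = k ∧ MaxSepN p n T ∧ (n - d) ∈ T ∧ ∀ x ∈ T, x ≤ n - d := by
    intro T hT
    obtain ⟨hTA, hTf⟩ := Finset.mem_filter.mp hT
    obtain ⟨hTpow, hTcard, hTmax⟩ := Finset.mem_filter.mp hTA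
    have hne : T.Nonempty := Finset.card_pos.mp (by omega)
    rw [max_unbot' hne] at hTf
    have h2 : T.max' hne < n := Finset.mem_range.mp (hTmax.1 (T.max'_mem hne))
    have hs : T.max' hne = n - d := by omega
    exact ⟨hTcard, hTmax, hs ▸ T.max'_mem hne, fun x hx => hs ▸ Finset.le_max' T x hx⟩
  refine Finset.card_nbij' (fun T => T.erase (n - d)) (fun T' => insert (n - d) T')
    ?_ ?_ ?_ ?_
  · -- forward map lands in the target
    intro T hT
    obtain ⟨hTcard, hTmax, hsT, hle⟩ := hTfacts T hT
    simp only [Finset.mem_coe, Finset.mem_filter, Finset.mem_powerset]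
    have hsub' : T.erase (n - d) ⊆ Finset.range m := by
      intro x hx
      obtain ⟨hxne, hxT⟩ := Finset.mem_erase.mp hx
      have hxlt : x < n - d := lt_of_le_of_ne (hle x hxT) hxne
      have := hTmax.2.1 x hxT (n - d) hsT hxlt
      rw [Finset.mem_range]; omega
    refine ⟨hsub', ?_, hsub', sepN_mono (Finset.erase_subset _ _) hTmax.2.1, ?_⟩
    · rw [Finset.card_erase_of_mem hsT, hTcard]
    · intro j hj hjT' hsep'
      have hjne : j ≠ n - d := by omega
      have hjT : j ∉ T := fun h => hjT' (Finset.mem_erase.mpr ⟨hjne, h⟩)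
      refine hTmax.2.2 j (by omega) hjT ?_
      intro a ha c hc hac
      by_cases hane : a = n - d
      · exfalso
        rcases Finset.mem_insert.mp hc with rfl | hcT
        · omega
        · have := hle c hcT; omega
      · by_cases hcne : c = n - d
        · have haa : a < m := by
            rcases Finset.mem_insert.mp ha with rfl | haT
            · exact hj
            · exact Finset.mem_range.mp (hsub' (Finset.mem_erase.mpr ⟨hane, haT⟩))
          omega
        · refine hsep' a ?_ c ?_ hac
          · rcases Finset.mem_insert.mp ha with rfl | haT
            · exact Finset.mem_insert_self _ _
            · exact Finset.mem_insert_of_mem (Finset.mem_erase.mpr ⟨hane, haT⟩)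
          · rcases Finset.mem_insert.mp hc with rfl | hcT
            · exact Finset.mem_insert_self _ _
            · exact Finset.mem_insert_of_mem (Finset.mem_erase.mpr ⟨hcne, hcT⟩)
  · -- reverse map lands in the fiber
    intro T' hT'
    simp only [Finset.mem_coe, Finset.mem_filter, Finset.mem_powerset] at hT'
    obtain ⟨hT'sub, hT'card, hT'max⟩ := hT'
    have hndT' : n - d ∉ T' := fun h => by
      have := Finset.mem_range.mp (hT'sub h); omega
    have hsubn : insert (n - d) T' ⊆ Finset.range n := by
      intro x hx
      rcases Finset.mem_insert.mp hx with rfl | hx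
      · exact Finset.mem_range.mpr (by omega)
      · exact Finset.mem_range.mpr (by have := Finset.mem_range.mp (hT'sub hx); omega)
    have hsep : SepN p (insert (n - d) T') := by
      intro a ha c hc hac
      rcases Finset.mem_insert.mp ha with rfl | haT
      · exfalso
        rcases Finset.mem_insert.mp hc with rfl | hcT
        · omega
        · have := Finset.mem_range.mp (hT'sub hcT); omega
      · rcases Finset.mem_insert.mp hc with rfl | hcT
        · have := Finset.mem_range.mp (hT'sub haT); omega
        · exact hT'max.2.1 a haT c hcT hac
    simp only [Finset.mem_coe, Finset.mem_filter, Finset.mem_powerset, hA]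
    refine ⟨⟨hsubn, ?_, hsubn, hsep, ?_⟩, ?_⟩
    · rw [Finset.card_insert_of_notMem hndT', hT'card]; omega
    · intro j hj hjT hsep2
      by_cases hjm : j < m
      · have hjT'' : j ∉ T' := fun h => hjT (Finset.mem_insert_of_mem h)
        refine hT'max.2.2 j hjm hjT'' (sepN_mono ?_ hsep2)
        intro x hx
        rcases Finset.mem_insert.mp hx with rfl | hx
        · exact Finset.mem_insert_self _ _
        · exact Finset.mem_insert_of_mem (Finset.mem_insert_of_mem hx)
      · have hjnd : j ≠ n - d := fun h => hjT (h ▸ Finset.mem_insert_self _ _)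
        by_cases hjlt : j < n - d
        · have := hsep2 j (Finset.mem_insert_self _ _) (n - d)
            (Finset.mem_insert_of_mem (Finset.mem_insert_self _ _)) hjlt
          omega
        · have := hsep2 (n - d)
            (Finset.mem_insert_of_mem (Finset.mem_insert_self _ _))
            j (Finset.mem_insert_self _ _) (by omega)
          omega
    · have hne : (insert (n - d) T').Nonempty := Finset.insert_nonempty _ _
      rw [max_unbot' hne]
      have hmax' : (insert (n - d) T').max' hne = n - d := by
        refine le_antisymm (Finset.max'_le _ _ _ ?_)
          (Finset.le_max' _ _ (Finset.mem_insert_self _ _))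
        intro y hy
        rcases Finset.mem_insert.mp hy with rfl | hy
        · exact le_rfl
        · have := Finset.mem_range.mp (hT'sub hy); omega
      rw [hmax']
      omega
  · intro T hT
    exact Finset.insert_erase (hTfacts T hT).2.2.1
  · intro T' hT'
    simp only [Finset.mem_coe, Finset.mem_filter, Finset.mem_powerset] at hT'
    have hndT' : n - d ∉ T' := fun h => by
      have := Finset.mem_range.mp (hT'.1 h); omega
    exact Finset.erase_insert hndT'

/-- For `p ≥ 1`, the numbers `h_k(n)` of maximal induced hypercubes of dimension `k`
in the Fibonacci `p`-cube `Γ^p_n` satisfy, for all `n ≥ 2p+1` and `k ≥ 1`,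
`h_k(n) = ∑_{i=1}^{p+1} h_{k-1}(n-p-i)`. -/
theorem stmt18 (p n k : ℕ) (hp : 1 ≤ p) (hk : 1 ≤ k) (hn : 2 * p + 1 ≤ n) :
    hCount p n k = ∑ i ∈ Finset.Icc 1 (p + 1), hCount p (n - p - i) (k - 1) := by
  rw [hCount_eq, key p n k hp hk hn]
  exact Finset.sum_congr rfl fun i _ => (hCount_eq p (n - p - i) (k - 1)).symm
end
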